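/- Let p be a prime, let k be an odd positive integer, and let M = sift({p, p^k}). Then M = {n ∈ ℕ+ : val_p(n) is even}. -/
import Mathlib


/-- Membership in the selective sifting of `S`: `0 < n`, and `n` cannot be written as
`n = a·b` with `a ∈ S` and `b` itself in the selective sifting (necessarily `b < n`). -/
def siftMem (S : Set ℕ) : ℕ → Prop := fun n =>
  Nat.strongRecOn n (fun n ih =>
    0 < n ∧ ¬ ∃ a ∈ S, ∃ b, ∃ hb : b < n, ih b hb ∧ n = a * b)

/-- The selective sifting `sift S ⊆ ℕ+`. -/
def sift (S : Set ℕ) : Set ℕ := {n | siftMem S n}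

lemma siftMem_iff (S : Set ℕ) (n : ℕ) :
    siftMem S n ↔ 0 < n ∧ ¬ ∃ a ∈ S, ∃ b, b < n ∧ siftMem S b ∧ n = a * b := by
  show (Nat.strongRecOn n _ : Prop) ↔ _
  rw [Nat.strongRecOn_eq]
  constructor
  · rintro ⟨h1, h2⟩
    refine ⟨h1, fun ⟨a, ha, b, hb, hsb, he⟩ => h2 ⟨a, ha, b, hb, hsb, he⟩⟩
  · rintro ⟨h1, h2⟩
    refine ⟨h1, fun ⟨a, ha, b, hb, hsb, he⟩ => h2 ⟨a, ha, b, hb, hsb, he⟩⟩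

/-- For a prime `p` and odd `k ≥ 1`,
`sift {p, p^k} = {n ∈ ℕ+ : val_p(n) even}`. -/
theorem sift_p_pk_odd (p k : ℕ) (hp : p.Prime) (hk : Odd k) :
    sift {p, p ^ k} = {n | 0 < n ∧ Even (padicValNat p n)} := by
  have hfact : Fact p.Prime := ⟨hp⟩
  have key : ∀ n, siftMem {p, p ^ k} n ↔ 0 < n ∧ Even (padicValNat p n) := by
    intro n
    induction n using Nat.strong_induction_on with
    | _ n ih =>
      rw [siftMem_iff]
      constructor
      · rintro ⟨hn, hno⟩
        refine ⟨hn, ?_⟩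
        by_contra hodd
        rw [Nat.not_even_iff_odd] at hodd
        have hv1 : 1 ≤ padicValNat p n := hodd.pos
        have hpd : p ∣ n :=
          dvd_trans (dvd_pow_self p hodd.pos.ne') pow_padicValNat_dvd
        obtain ⟨b, hb⟩ := hpd
        have hb0 : 0 < b := by
          rcases Nat.eq_zero_or_pos b with rfl | h
          · simp [hb] at hn
          · exact h
        have hval : padicValNat p n = 1 + padicValNat p b := by
          rw [hb, padicValNat.mul hp.ne_zero hb0.ne', padicValNat.self hp.one_lt]
        have hvb : Even (padicValNat p b) := by
          rw [hval] at hodd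
          rcases Nat.even_or_odd (padicValNat p b) with h | h
          · exact h
          · exact absurd hodd (by simp [Nat.not_odd_iff_even, Nat.even_add_one,
              Nat.add_comm, Nat.not_even_iff_odd, h])
        have hlt : b < n := by
          rw [hb]
          exact (Nat.lt_mul_iff_one_lt_left hb0).mpr hp.one_lt
        exact hno ⟨p, Or.inl rfl, b, hlt, (ih b hlt).mpr ⟨hb0, hvb⟩, hb⟩
      · rintro ⟨hn, hev⟩
        refine ⟨hn, ?_⟩
        rintro ⟨a, ha, b, hlt, hsb, he⟩
        have hb0 : 0 < b := (ih b hlt).mp hsb |>.1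
        have hbe : Even (padicValNat p b) := ((ih b hlt).mp hsb).2
        have ha0 : a ≠ 0 := by
          rcases ha with rfl | rfl
          · exact hp.ne_zero
          · exact (pow_ne_zero _ hp.ne_zero)
        have : padicValNat p n = padicValNat p a + padicValNat p b := by
          rw [he, padicValNat.mul ha0 hb0.ne']
        have hodda : Odd (padicValNat p a) := by
          rcases ha with rfl | rfl
          · simp [padicValNat.self hp.one_lt]
          · simpa [padicValNat.prime_pow] using hk
        rw [this] at hev
        exact (Nat.not_even_iff_odd.mpr (hodda.add_even hbe)) hev
  ext n
  simp only [sift, Set.mem_setOf_eq]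
  exact key n
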